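/- arXiv:1703.08850 — 3 statements merged into one kernel-verified Lean document; each statement's English description precedes it below -/
import Mathlib

section
/- Let w ∈ W_n correspond, under the realization of W_n as signed permutations, to the tuple (m_1, ..., m_n) ∈ X_n^n with m_i = w(i). Then for all r_1, ..., r_n ∈ {0, 1, ..., n}: (v_1^{r_1} ⊗ ⋯ ⊗ v_n^{r_n}) · Φ(T_w) = v_{m_1}^{r_{|m_1|}} ⊗ ⋯ ⊗ v_{m_n}^{r_{|m_n|}}, where Φ is the tensorial representation of E_n^B on V^{⊗n}. -/
set_option synthInstance.maxHeartbeats 1000000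
set_option maxHeartbeats 2000000
noncomputable section

open scoped Classical

/-- Generators of the bt-algebra of type B (0-indexed: `T i` is the paper's
`T_{i+1}`, `E i` is `E_{i+1}`, `F j` is `F_{j+1}`). -/
inductive BtGen (n : ℕ) : Type
  | B1 : 0 < n → BtGen n
  | T : Fin (n - 1) → BtGen n
  | E : Fin (n - 1) → BtGen n
  | F : Fin n → BtGen n

namespace Bt

variable (R : Type) [Field R] (u v : R) (n : ℕ)

/-- Shorthand for the canonical image of a generator in the free algebra. -/
def g (x : BtGen n) : FreeAlgebra R (BtGen n) := FreeAlgebra.ι R x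

/-- The defining relations of the bt-algebra of type B. -/
inductive Rel : FreeAlgebra R (BtGen n) → FreeAlgebra R (BtGen n) → Prop
  | tt_far (i j : Fin (n - 1)) (h : (i : ℕ) + 1 < (j : ℕ)) :
      Rel (g R n (.T i) * g R n (.T j)) (g R n (.T j) * g R n (.T i))
  | braid (i j : Fin (n - 1)) (h : (j : ℕ) = (i : ℕ) + 1) :
      Rel (g R n (.T i) * g R n (.T j) * g R n (.T i))
          (g R n (.T j) * g R n (.T i) * g R n (.T j))
  | quadT (i : Fin (n - 1)) :
      Rel (g R n (.T i) * g R n (.T i))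
          (1 + algebraMap R _ (u - u⁻¹) * (g R n (.E i) * g R n (.T i)))
  | idemE (i : Fin (n - 1)) : Rel (g R n (.E i) * g R n (.E i)) (g R n (.E i))
  | commEE (i j : Fin (n - 1)) :
      Rel (g R n (.E i) * g R n (.E j)) (g R n (.E j) * g R n (.E i))
  | commET (i : Fin (n - 1)) :
      Rel (g R n (.E i) * g R n (.T i)) (g R n (.T i) * g R n (.E i))
  | commET_far (i j : Fin (n - 1)) (h : (i : ℕ) + 1 < (j : ℕ) ∨ (j : ℕ) + 1 < (i : ℕ)) :
      Rel (g R n (.E i) * g R n (.T j)) (g R n (.T j) * g R n (.E i))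
  | eet (i j : Fin (n - 1)) (h : (j : ℕ) = (i : ℕ) + 1 ∨ (i : ℕ) = (j : ℕ) + 1) :
      Rel (g R n (.E i) * g R n (.E j) * g R n (.T i))
          (g R n (.T i) * (g R n (.E i) * g R n (.E j)))
  | ete (i j : Fin (n - 1)) (h : (j : ℕ) = (i : ℕ) + 1 ∨ (i : ℕ) = (j : ℕ) + 1) :
      Rel (g R n (.E j) * g R n (.T i) * g R n (.E j))
          (g R n (.T i) * (g R n (.E i) * g R n (.E j)))
  | ett (i j : Fin (n - 1)) (h : (j : ℕ) = (i : ℕ) + 1 ∨ (i : ℕ) = (j : ℕ) + 1) :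
      Rel (g R n (.E i) * g R n (.T j) * g R n (.T i))
          (g R n (.T j) * g R n (.T i) * g R n (.E j))
  | bquad (h : 0 < n) (i : Fin (n - 1)) (hi : (i : ℕ) = 0) :
      Rel (g R n (.B1 h) * g R n (.T i) * g R n (.B1 h) * g R n (.T i))
          (g R n (.T i) * g R n (.B1 h) * g R n (.T i) * g R n (.B1 h))
  | commBT (h : 0 < n) (i : Fin (n - 1)) (hi : 0 < (i : ℕ)) :
      Rel (g R n (.B1 h) * g R n (.T i)) (g R n (.T i) * g R n (.B1 h))
  | quadB (h : 0 < n) (j : Fin n) (hj : (j : ℕ) = 0) :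
      Rel (g R n (.B1 h) * g R n (.B1 h))
          (1 + algebraMap R _ (v - v⁻¹) * (g R n (.F j) * g R n (.B1 h)))
  | commBE (h : 0 < n) (i : Fin (n - 1)) :
      Rel (g R n (.B1 h) * g R n (.E i)) (g R n (.E i) * g R n (.B1 h))
  | idemF (j : Fin n) : Rel (g R n (.F j) * g R n (.F j)) (g R n (.F j))
  | commBF (h : 0 < n) (j : Fin n) :
      Rel (g R n (.B1 h) * g R n (.F j)) (g R n (.F j) * g R n (.B1 h))
  | commFE (j : Fin n) (i : Fin (n - 1)) :
      Rel (g R n (.F j) * g R n (.E i)) (g R n (.E i) * g R n (.F j))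
  | ftEq (i : Fin (n - 1)) (j k : Fin n) (hj : (j : ℕ) = (i : ℕ)) (hk : (k : ℕ) = (i : ℕ) + 1) :
      Rel (g R n (.F j) * g R n (.T i)) (g R n (.T i) * g R n (.F k))
  | ftEq' (i : Fin (n - 1)) (j k : Fin n) (hj : (j : ℕ) = (i : ℕ) + 1) (hk : (k : ℕ) = (i : ℕ)) :
      Rel (g R n (.F j) * g R n (.T i)) (g R n (.T i) * g R n (.F k))
  | ftNe (i : Fin (n - 1)) (j : Fin n) (hj : (j : ℕ) ≠ (i : ℕ) ∧ (j : ℕ) ≠ (i : ℕ) + 1) :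
      Rel (g R n (.F j) * g R n (.T i)) (g R n (.T i) * g R n (.F j))
  | eff (i : Fin (n - 1)) (j k : Fin n) (hj : (j : ℕ) = (i : ℕ)) (hk : (k : ℕ) = (i : ℕ) + 1) :
      Rel (g R n (.E i) * g R n (.F j)) (g R n (.F j) * g R n (.F k))
  | eff' (i : Fin (n - 1)) (j k : Fin n) (hj : (j : ℕ) = (i : ℕ)) (hk : (k : ℕ) = (i : ℕ) + 1) :
      Rel (g R n (.E i) * g R n (.F k)) (g R n (.F j) * g R n (.F k))

/-- The bt-algebra of type B, presented by generators and relations. -/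
abbrev EB := RingQuot (Rel R u v n)

/-- The image of a generator in the bt-algebra of type B. -/
def gen (x : BtGen n) : EB R u v n := RingQuot.mkAlgHom R (Rel R u v n) (g R n x)

/-- `tW i` is the paper's braiding generator `T_{i+1}` (out of range: `1`). -/
def tW (i : ℕ) : EB R u v n := if h : i < n - 1 then gen R u v n (.T ⟨i, h⟩) else 1

/-- `eW i` is the paper's tie generator `E_{i+1}` (out of range: `1`). -/
def eW (i : ℕ) : EB R u v n := if h : i < n - 1 then gen R u v n (.E ⟨i, h⟩) else 1

/-- `fW j` is the paper's framing generator `F_{j+1}` (out of range: `1`). -/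
def fW (j : ℕ) : EB R u v n := if h : j < n then gen R u v n (.F ⟨j, h⟩) else 1

/-- The loop generator `B_1`. -/
def bW : EB R u v n := if h : 0 < n then gen R u v n (.B1 h) else 1

/-- The inverse of the braiding generator: `T_i⁻¹ = T_i - (u - u⁻¹) E_i` (0-indexed). -/
def tInv (i : ℕ) : EB R u v n := tW R u v n i - algebraMap R _ (u - u⁻¹) * eW R u v n i

/-- The element `E_{i,j}` of the paper, for 0-indexed `a = i - 1`, `b = j - 1` with `a < b`:
`E_{i,j} = T_i ⋯ T_{j-2} E_{j-1} T_{j-2}⁻¹ ⋯ T_i⁻¹` (and `E_i` when `j = i+1`). -/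
def Epair (a b : ℕ) : EB R u v n :=
  ((List.range (b - a - 1)).map fun k => tW R u v n (a + k)).prod * eW R u v n (b - 1) *
    (((List.range (b - a - 1)).reverse).map fun k => tInv R u v n (a + k)).prod

/-- All pairs of elements of `Fin m` in lexicographic order. -/
def pairList (m : ℕ) : List (Fin m × Fin m) :=
  (List.finRange m).flatMap fun a => (List.finRange m).map fun b => (a, b)

/-- `B_k = T_{k-1} ⋯ T_1 B_1 T_1⁻¹ ⋯ T_{k-1}⁻¹`, paper-indexed (`1 ≤ k ≤ n`). -/
def bK (k : ℕ) : EB R u v n :=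
  (((List.range (k - 1)).reverse).map fun a => tW R u v n a).prod * bW R u v n *
    ((List.range (k - 1)).map fun a => tInv R u v n a).prod

/-- `B̄_k = T_{k-1} ⋯ T_1 B_1 T_1 ⋯ T_{k-1}`, paper-indexed. -/
def bBar (k : ℕ) : EB R u v n :=
  (((List.range (k - 1)).reverse).map fun a => tW R u v n a).prod * bW R u v n *
    ((List.range (k - 1)).map fun a => tW R u v n a).prod

/-- `𝕋⁺_{k,j} = T_{k-1} ⋯ T_j` (and `1` for `j = k`), paper-indexed. -/
def Tp (k j : ℕ) : EB R u v n :=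
  (((List.range (k - j)).reverse).map fun a => tW R u v n (j - 1 + a)).prod

/-- `𝕋⁻_{k,j} = T_{k-1} ⋯ T_j B_j` (and `B_k` for `j = k`), paper-indexed. -/
def Tm (k j : ℕ) : EB R u v n := Tp R u v n k j * bK R u v n j

/-- `𝕋̄⁻_{k,j} = T_{k-1} ⋯ T_j B̄_j` (and `B̄_k` for `j = k`), paper-indexed. -/
def TmBar (k j : ℕ) : EB R u v n := Tp R u v n k j * bBar R u v n j

/-- The product `T_{w_1} ⋯ T_{w_m}` associated to a word in the letters
`{r_1, s_1, …, s_{n-1}}` (letter `0` is `r_1 ↦ B_1`, letter `k ≥ 1` is `s_k ↦ T_k`). -/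
def wordAlg (l : List (Fin n)) : EB R u v n :=
  (l.map fun i => if (i : ℕ) = 0 then bW R u v n else tW R u v n ((i : ℕ) - 1)).prod

end Bt
/-- The field `K = ℂ(u, v)` of rational functions in two indeterminates over `ℂ`. -/
abbrev Kfield : Type := FractionRing (MvPolynomial (Fin 2) ℂ)

/-- The indeterminate `u` of `K = ℂ(u, v)`. -/
def uK : Kfield := algebraMap (MvPolynomial (Fin 2) ℂ) Kfield (MvPolynomial.X 0)

/-- The indeterminate `v` of `K = ℂ(u, v)`. -/
def vK : Kfield := algebraMap (MvPolynomial (Fin 2) ℂ) Kfield (MvPolynomial.X 1)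
namespace Bt

/-- The index set of the basis `{v_i^r : i ∈ X_n, 0 ≤ r ≤ n}` of `V`:
`X_n = {±1, …, ±n}` is modelled as `Fin n × Bool` (`(i, true) = i + 1`,
`(i, false) = -(i + 1)`). -/
abbrev VIdx (n : ℕ) := (Fin n × Bool) × Fin (n + 1)

/-- `V^{⊗n}`, modelled on its basis: the free `K`-module on the `n`-fold
products `v_{i_1}^{r_1} ⊗ ⋯ ⊗ v_{i_n}^{r_n}` of basis vectors of `V`. -/
abbrev Vten (n : ℕ) := (Fin n → VIdx n) →₀ Kfield

/-- The basis vector `v_{i_1}^{r_1} ⊗ ⋯ ⊗ v_{i_n}^{r_n}` of `V^{⊗n}`. -/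
def bv {n : ℕ} (f : Fin n → VIdx n) : Vten n := Finsupp.single f 1

/-- The integer represented by an element of `X_n`. -/
def toIntX {n : ℕ} (x : Fin n × Bool) : ℤ := if x.2 then (x.1 : ℤ) + 1 else -((x.1 : ℤ) + 1)

/-- Negation on `X_n`. -/
def negX {n : ℕ} (x : Fin n × Bool) : Fin n × Bool := (x.1, !x.2)

/-- The endomorphism `𝐓` of `V ⊗ V` acting in the tensor positions `p`, `q`
of `V^{⊗n}` (for `𝐓_i`, take `p = i`, `q = i + 1`): on a basis vector with
`v_i^r` in position `p` and `v_j^s` in position `q`, it gives `u ·` (swap) if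
`i = j, r = s`; (swap) if `i < j, r = s`; (swap) `+ (u - u⁻¹) ·` (identity) if
`i > j, r = s`; and (swap) if `r ≠ s`. -/
def opT (n : ℕ) (p q : Fin n) : Module.End Kfield (Vten n) :=
  Finsupp.lift (Vten n) Kfield (Fin n → VIdx n) fun f =>
    let a := f p
    let b := f q
    let g := Function.update (Function.update f p b) q a
    if a.2 = b.2 then
      if a.1 = b.1 then uK • bv g
      else if toIntX a.1 < toIntX b.1 then bv g
      else bv g + (uK - uK⁻¹) • bv f
    else bv g

/-- The endomorphism `𝐄` of `V ⊗ V` acting in the tensor positions `p`, `q`. -/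
def opE (n : ℕ) (p q : Fin n) : Module.End Kfield (Vten n) :=
  Finsupp.lift (Vten n) Kfield (Fin n → VIdx n) fun f =>
    if (f p).2 = (f q).2 then bv f else 0

/-- The endomorphism `𝐁` of `V` acting in the tensor position `p` (for `𝐁_1`,
take `p = 0`): `v_i^r ↦ v_{-i}^r` if `r ≠ 0` or (`r = 0` and `i > 0`), and
`v_i^r ↦ v_{-i}^r + (v - v⁻¹) v_i^r` if `r = 0` and `i < 0`. -/
def opB (n : ℕ) (p : Fin n) : Module.End Kfield (Vten n) :=
  Finsupp.lift (Vten n) Kfield (Fin n → VIdx n) fun f =>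
    let a := f p
    let g := Function.update f p (negX a.1, a.2)
    if a.2 = 0 ∧ a.1.2 = false then bv g + (vK - vK⁻¹) • bv f else bv g

/-- The endomorphism `𝐅` of `V` acting in the tensor position `p`:
`v_i^r ↦ v_i^r` if `r = 0`, and `v_i^r ↦ 0` if `r > 0`. -/
def opF (n : ℕ) (p : Fin n) : Module.End Kfield (Vten n) :=
  Finsupp.lift (Vten n) Kfield (Fin n → VIdx n) fun f =>
    if (f p).2 = 0 then bv f else 0

end Bt
namespace Bt

/-- The sign-flip involution of `X_n = {±1, …, ±n}` (modelled as `Fin n × Bool`,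
where `(i, true)` is `i + 1` and `(i, false)` is `-(i + 1)`). -/
def flipPerm (n : ℕ) : Equiv.Perm (Fin n × Bool) :=
  (Equiv.refl (Fin n)).prodCongr ⟨Bool.not, Bool.not, Bool.not_not, Bool.not_not⟩

/-- The Coxeter generators of `W_n` as signed permutations: letter `0` is
`r_1` (the sign change of `±1`), and letter `k ≥ 1` is `s_k` (the transposition
of `k` and `k+1`, together with `-k` and `-(k+1)`). -/
def genPerm (n : ℕ) (i : Fin n) : Equiv.Perm (Fin n × Bool) :=
  if h : (i : ℕ) = 0 then Equiv.swap (⟨0, i.pos⟩, true) (⟨0, i.pos⟩, false)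
  else
    Equiv.swap (⟨(i : ℕ) - 1, by have := i.isLt; omega⟩, true) (⟨(i : ℕ), i.isLt⟩, true) *
      Equiv.swap (⟨(i : ℕ) - 1, by have := i.isLt; omega⟩, false) (⟨(i : ℕ), i.isLt⟩, false)

/-- The signed permutation `w_1 ⋯ w_m` associated to a word in the letters
`{r_1, s_1, …, s_{n-1}}`. -/
def wordPerm (n : ℕ) (l : List (Fin n)) : Equiv.Perm (Fin n × Bool) :=
  (l.map (genPerm n)).prod

/-- The Coxeter group `W_n` of type `B_n`, realized as the group of signed
permutations of `X_n = {±1, …, ±n}` (the permutations of `Fin n × Bool`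
commuting with the sign flip). -/
abbrev Wb (n : ℕ) := Subgroup.centralizer {flipPerm n}

end Bt

/-!
Fix a reduced word for `w`. The type-B length `inv + nsp` of a window grows by exactly one
under each right multiplication by a generator that is an ascent and drops by one otherwise;
since a reduced word has length equal to the length of `w`, every letter of it is read as an
ascent. On an ascent, `𝐁` meets a positive entry `v_i^r` (`i > 0`) and `𝐓` meets
`v_a^r ⊗ v_b^s` with `a < b`, so both act on the basis vector indexed by `σ` by a plain
signed transposition of tensor factors, without correction terms: the vector indexed by `σ` goes
to the one indexed by `σ s`.
-/

namespace Bt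

open Equiv

variable {n : ℕ}

lemma toIntX_injective : Function.Injective (toIntX (n := n)) := by
  rintro ⟨i, _ | _⟩ ⟨j, _ | _⟩ h <;>
    simp only [toIntX, Bool.false_eq_true, Bool.true_eq_false, ↓reduceIte, Prod.mk.injEq,
      Fin.ext_iff, and_true, and_false] at h ⊢ <;> omega

lemma toIntX_pos_iff (x : Fin n × Bool) : 0 < toIntX x ↔ x.2 = true := by
  rcases x with ⟨i, _ | _⟩ <;> simp [toIntX]

lemma toIntX_ne_zero (x : Fin n × Bool) : toIntX x ≠ 0 := by
  rcases x with ⟨i, _ | _⟩ <;> simp only [toIntX, Bool.false_eq_true, ↓reduceIte] <;> omega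

lemma toIntX_flipPerm (x : Fin n × Bool) : toIntX (flipPerm n x) = -toIntX x := by
  rcases x with ⟨i, _ | _⟩ <;> simp [toIntX, flipPerm]

lemma mem_Wb_iff {σ : Perm (Fin n × Bool)} :
    σ ∈ Wb n ↔ ∀ x, σ (flipPerm n x) = flipPerm n (σ x) := by
  rw [Subgroup.mem_centralizer_singleton_iff, Perm.ext_iff]
  simp only [Perm.mul_apply]

def predPos (c : Fin n) : Fin n := ⟨c - 1, by omega⟩

lemma predPos_add_one {c : Fin n} (hc : (c : ℕ) ≠ 0) : (predPos c : ℕ) + 1 = c := by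
  simp only [predPos]
  omega

lemma predPos_ne {c : Fin n} (hc : (c : ℕ) ≠ 0) : predPos c ≠ c := by
  have := predPos_add_one hc
  exact fun h => by rw [h] at this; omega

lemma genPerm_of_eq_zero {c : Fin n} (hc : (c : ℕ) = 0) :
    genPerm n c = swap (c, true) (c, false) := by
  have h0 : (⟨0, c.pos⟩ : Fin n) = c := Fin.ext hc.symm
  rw [genPerm, dif_pos hc, h0]

lemma genPerm_apply_of_ne_zero {c : Fin n} (hc : (c : ℕ) ≠ 0) (k : Fin n) (b : Bool) :
    genPerm n c (k, b) = (swap (predPos c) c k, b) := by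
  rw [genPerm, dif_neg hc, Perm.mul_apply]
  change swap (predPos c, true) (c, true) (swap (predPos c, false) (c, false) (k, b)) = _
  have hpc := predPos_ne hc
  rcases eq_or_ne k (predPos c) with rfl | h1
  · cases b <;> simp [swap_apply_of_ne_of_ne, hpc]
  rcases eq_or_ne k c with rfl | h2
  · cases b <;> simp [swap_apply_of_ne_of_ne, hpc, hpc.symm]
  cases b <;> simp [swap_apply_of_ne_of_ne, h1, h2]

lemma genPerm_mem_Wb (c : Fin n) : genPerm n c ∈ Wb n := by
  rw [mem_Wb_iff]
  rintro ⟨k, b⟩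
  by_cases hc : (c : ℕ) = 0
  · rw [genPerm_of_eq_zero hc]
    rcases eq_or_ne k c with rfl | h
    · cases b <;> simp [flipPerm]
    · cases b <;> simp [flipPerm, swap_apply_of_ne_of_ne, h]
  · simp only [flipPerm, genPerm_apply_of_ne_zero hc]
    rfl

lemma genPerm_mul_self (c : Fin n) : genPerm n c * genPerm n c = 1 := by
  by_cases hc : (c : ℕ) = 0
  · rw [genPerm_of_eq_zero hc, swap_mul_self]
  · ext ⟨k, b⟩ : 1
    simp [genPerm_apply_of_ne_zero hc]

lemma wordPerm_cons (c : Fin n) (l : List (Fin n)) :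
    wordPerm n (c :: l) = genPerm n c * wordPerm n l := by
  simp [wordPerm]

lemma wordPerm_concat (l : List (Fin n)) (c : Fin n) :
    wordPerm n (l ++ [c]) = wordPerm n l * genPerm n c := by
  simp [wordPerm]

lemma swap_lt_swap_iff_of_succ {p c i j : Fin n} (hpc : (p : ℕ) + 1 = c)
    (hpc' : ¬(i = p ∧ j = c)) (hcp : ¬(i = c ∧ j = p)) :
    swap p c i < swap p c j ↔ i < j := by
  simp only [swap_apply_def, Fin.lt_def, Fin.ext_iff] at *
  split_ifs <;> omega

def pairWeight (v : Fin n → ℤ) (x : Fin n × Fin n) : ℕ :=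
  (if x.1 < x.2 ∧ v x.2 < v x.1 then 1 else 0) + (if x.1 ≤ x.2 ∧ v x.1 + v x.2 < 0 then 1 else 0)

/-- The Coxeter length of the signed permutation with window `v`, in the form `inv v + nsp v`
of Björner–Brenti, *Combinatorics of Coxeter Groups*, Prop. 8.1.1. -/
def lengthB (v : Fin n → ℤ) : ℕ := ∑ x : Fin n × Fin n, pairWeight v x

lemma lengthB_update_neg (v : Fin n → ℤ) {c : Fin n} (hc : ∀ j, c ≤ j) (h : 0 < v c) :
    lengthB (Function.update v c (-v c)) = lengthB v + 1 := by
  -- only the weight of `(c, c)` changes; for `j ≠ c` the two summands of `(c, j)` trade places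
  have key : ∀ x, pairWeight (Function.update v c (-v c)) x
      = pairWeight v x + if x = (c, c) then 1 else 0 := by
    rintro ⟨i, j⟩
    by_cases hi : i = c <;> by_cases hj : j = c
    · subst hi hj
      simp only [pairWeight, lt_self_iff_false, Function.update_self, and_self, if_true,
        le_refl, add_self_neg_iff, Int.neg_neg_iff_pos, true_and, zero_add, if_false]
      split_ifs <;> omega
    · subst hi
      have hij : i < j := lt_of_le_of_ne (hc j) (Ne.symm hj)
      simp only [pairWeight, hij, hij.le, ne_eq, hj, not_false_eq_true, Function.update_of_ne,
        Function.update_self, true_and, Prod.mk.injEq, and_false, if_false, add_zero]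
      split_ifs <;> omega
    · subst hj
      have hij : ¬ i ≤ j := fun h => hi (le_antisymm h (hc i))
      simp [pairWeight, hij, mt le_of_lt hij, hi]
    · simp [pairWeight, Function.update_of_ne hj, hi]
  simp only [lengthB, key, Finset.sum_add_distrib, Finset.sum_ite_eq', Finset.mem_univ, if_true]

lemma lengthB_comp_swap (v : Fin n → ℤ) {p c : Fin n} (hpc : (p : ℕ) + 1 = c)
    (h : v p < v c) : lengthB (v ∘ swap p c) = lengthB v + 1 := by
  have hp : p < c := Fin.lt_def.mpr (by omega)
  set K := if v p + v c < 0 then 1 else 0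
  -- reindexing by `swap p c` changes only the weights of `(p, c)` and `(c, p)`
  have key : ∀ x : Fin n × Fin n,
      pairWeight (v ∘ swap p c) (swap p c x.1, swap p c x.2) + (if x = (p, c) then K else 0)
        = pairWeight v x + if x = (c, p) then K + 1 else 0 := by
    rintro ⟨i, j⟩
    by_cases h1 : i = p ∧ j = c
    · obtain ⟨rfl, rfl⟩ := h1
      simp [pairWeight, hp, hp.ne', hp.le, not_lt.mpr hp.le, not_le.mpr hp, K, add_comm,
        h.not_gt]
    by_cases h2 : i = c ∧ j = p
    · obtain ⟨rfl, rfl⟩ := h2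
      simp [pairWeight, hp, hp.ne', hp.le, not_le.mpr hp, K, h, add_comm]
    have hlt := swap_lt_swap_iff_of_succ hpc h1 h2
    have hle : swap p c i ≤ swap p c j ↔ i ≤ j := by
      rw [← not_lt, ← not_lt, swap_lt_swap_iff_of_succ hpc (by tauto) (by tauto)]
    simp only [pairWeight, Function.comp_apply, swap_apply_self, hlt, hle, Prod.mk.injEq, h1, h2,
      if_false]
  have hsum := Finset.sum_congr rfl fun x (_ : x ∈ Finset.univ) => key x
  simp only [Finset.sum_add_distrib, Finset.sum_ite_eq', Finset.mem_univ, if_true] at hsum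
  rw [lengthB, ← ((swap p c).prodCongr (swap p c)).sum_comp, lengthB]
  simp only [prodCongr_apply, Prod.map] at hsum ⊢
  omega

/-- Position `k` of the window holds the integer `σ(k + 1)`. -/
def window (σ : Perm (Fin n × Bool)) (k : Fin n) : ℤ := toIntX (σ (k, true))

lemma window_injective (σ : Perm (Fin n × Bool)) : Function.Injective (window σ) :=
  fun _ _ h => congrArg Prod.fst (σ.injective (toIntX_injective h))

lemma window_one : window (1 : Perm (Fin n × Bool)) = fun k : Fin n => ((k : ℕ) : ℤ) + 1 := by
  ext k
  simp [window, toIntX]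

lemma window_mul_genPerm_of_eq_zero {σ : Perm (Fin n × Bool)} (hσ : σ ∈ Wb n) {c : Fin n}
    (hc : (c : ℕ) = 0) :
    window (σ * genPerm n c) = Function.update (window σ) c (-window σ c) := by
  ext k
  rcases eq_or_ne k c with rfl | hk
  · have hflip : ((k, false) : Fin n × Bool) = flipPerm n (k, true) := rfl
    simp only [window, Perm.mul_apply, genPerm_of_eq_zero hc, swap_apply_left,
      Function.update_self, hflip, mem_Wb_iff.mp hσ, toIntX_flipPerm]
  · simp [window, genPerm_of_eq_zero hc, swap_apply_of_ne_of_ne, hk]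

lemma window_mul_genPerm_of_ne_zero (σ : Perm (Fin n × Bool)) {c : Fin n} (hc : (c : ℕ) ≠ 0) :
    window (σ * genPerm n c) = window σ ∘ swap (predPos c) c := by
  ext k
  simp [window, genPerm_apply_of_ne_zero hc]

def IsAscent (σ : Perm (Fin n × Bool)) (c : Fin n) : Prop :=
  if (c : ℕ) = 0 then 0 < window σ c else window σ (predPos c) < window σ c

lemma lengthB_window_mul_genPerm {σ : Perm (Fin n × Bool)} (hσ : σ ∈ Wb n) {c : Fin n}
    (h : IsAscent σ c) : lengthB (window (σ * genPerm n c)) = lengthB (window σ) + 1 := by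
  unfold IsAscent at h
  split_ifs at h with hc
  · rw [window_mul_genPerm_of_eq_zero hσ hc]
    exact lengthB_update_neg _ (fun j => Fin.le_def.mpr (by omega)) h
  · rw [window_mul_genPerm_of_ne_zero σ hc]
    exact lengthB_comp_swap _ (predPos_add_one hc) h

lemma isAscent_mul_genPerm_of_not {σ : Perm (Fin n × Bool)} (hσ : σ ∈ Wb n) {c : Fin n}
    (h : ¬IsAscent σ c) : IsAscent (σ * genPerm n c) c := by
  unfold IsAscent at h ⊢
  split_ifs at h ⊢ with hc
  · rw [window_mul_genPerm_of_eq_zero hσ hc, Function.update_self]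
    have := toIntX_ne_zero (σ (c, true))
    exact neg_pos.mpr (lt_of_le_of_ne (not_lt.mp h) this)
  · have hne := (window_injective σ).ne (predPos_ne hc)
    rw [window_mul_genPerm_of_ne_zero σ hc, Function.comp_apply, Function.comp_apply,
      swap_apply_left, swap_apply_right]
    exact lt_of_le_of_ne (not_lt.mp h) hne.symm

lemma lengthB_window_of_not_isAscent {σ : Perm (Fin n × Bool)} (hσ : σ ∈ Wb n) {c : Fin n}
    (h : ¬IsAscent σ c) : lengthB (window σ) = lengthB (window (σ * genPerm n c)) + 1 := by
  have := lengthB_window_mul_genPerm (mul_mem hσ (genPerm_mem_Wb c))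
    (isAscent_mul_genPerm_of_not hσ h)
  rwa [mul_assoc, genPerm_mul_self, mul_one] at this

lemma lengthB_window_mul_genPerm_le {σ : Perm (Fin n × Bool)} (hσ : σ ∈ Wb n) (c : Fin n) :
    lengthB (window (σ * genPerm n c)) ≤ lengthB (window σ) + 1 := by
  by_cases h : IsAscent σ c
  · exact (lengthB_window_mul_genPerm hσ h).le
  · have := lengthB_window_of_not_isAscent hσ h
    omega

lemma lengthB_window_one : lengthB (window (1 : Perm (Fin n × Bool))) = 0 := by
  simp only [lengthB, window_one, pairWeight, Fin.lt_def]
  refine Finset.sum_eq_zero fun x _ => ?_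
  split_ifs <;> omega

lemma strictMono_of_lt_predPos {α : Type*} [Preorder α] {f : Fin n → α}
    (h : ∀ c : Fin n, (c : ℕ) ≠ 0 → f (predPos c) < f c) : StrictMono f := by
  cases n with
  | zero => exact fun a => a.elim0
  | succ m =>
    refine Fin.strictMono_iff_lt_succ.mpr fun i => ?_
    have hpred : predPos i.succ = i.castSucc := Fin.ext (by simp [predPos])
    simpa [hpred] using h i.succ (by simp)

lemma eq_one_of_forall_isAscent {σ : Perm (Fin n × Bool)} (hσ : σ ∈ Wb n)
    (h : ∀ c, IsAscent σ c) : σ = 1 := by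
  have hmono : StrictMono (window σ) := strictMono_of_lt_predPos fun c hc => by
    simpa [IsAscent, hc] using h c
  have hpos : ∀ k, (σ (k, true)).2 = true := fun k => by
    have h0 : 0 < window σ ⟨0, k.pos⟩ := by simpa [IsAscent] using h ⟨0, k.pos⟩
    exact (toIntX_pos_iff _).mp (h0.trans_le (hmono.monotone (Fin.le_def.mpr (Nat.zero_le _))))
  have hid : (fun k => (σ (k, true)).1) = id := by
    refine StrictMono.eq_id fun i j hij => ?_
    have := hmono hij
    simp only [window, toIntX, hpos, if_true] at this
    exact Fin.lt_def.mpr (by omega)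
  have htrue : ∀ k, σ (k, true) = (k, true) := fun k =>
    Prod.ext (congrFun hid k) (hpos k)
  ext ⟨k, _ | _⟩ : 1
  · have hflip : ((k, false) : Fin n × Bool) = flipPerm n (k, true) := rfl
    rw [hflip, mem_Wb_iff.mp hσ, htrue]
    rfl
  · exact htrue k

lemma lengthB_window_mul_wordPerm_le {σ : Perm (Fin n × Bool)} (hσ : σ ∈ Wb n)
    (l : List (Fin n)) :
    lengthB (window (σ * wordPerm n l)) ≤ lengthB (window σ) + l.length := by
  induction l generalizing σ with
  | nil => simp [wordPerm]
  | cons c l ih =>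
    have h1 := ih (mul_mem hσ (genPerm_mem_Wb c))
    have h2 := lengthB_window_mul_genPerm_le hσ c
    rw [wordPerm_cons, ← mul_assoc, List.length_cons]
    omega

lemma exists_wordPerm_eq {σ : Perm (Fin n × Bool)} (hσ : σ ∈ Wb n) :
    ∃ l, wordPerm n l = σ ∧ l.length = lengthB (window σ) := by
  obtain ⟨m, hm⟩ : ∃ m, lengthB (window σ) = m := ⟨_, rfl⟩
  induction m generalizing σ with
  | zero =>
    have hall : ∀ c, IsAscent σ c := fun c => by
      by_contra hc
      have := lengthB_window_of_not_isAscent hσ hc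
      omega
    obtain rfl := eq_one_of_forall_isAscent hσ hall
    exact ⟨[], rfl, hm.symm⟩
  | succ m ih =>
    obtain ⟨c, hc⟩ : ∃ c, ¬IsAscent σ c := by
      by_contra! hall
      rw [eq_one_of_forall_isAscent hσ hall, lengthB_window_one] at hm
      omega
    have hd := lengthB_window_of_not_isAscent hσ hc
    obtain ⟨l, hl, hlen⟩ := ih (mul_mem hσ (genPerm_mem_Wb c)) (by omega)
    refine ⟨l ++ [c], ?_, ?_⟩
    · rw [wordPerm_concat, hl, mul_assoc, genPerm_mul_self, mul_one]
    · rw [List.length_append, List.length_singleton]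
      omega

lemma isAscent_of_lengthB_mul_wordPerm_eq {σ : Perm (Fin n × Bool)} (hσ : σ ∈ Wb n)
    {c : Fin n} {l : List (Fin n)}
    (h : lengthB (window (σ * wordPerm n (c :: l))) = lengthB (window σ) + (c :: l).length) :
    IsAscent σ c ∧ lengthB (window (σ * genPerm n c * wordPerm n l))
      = lengthB (window (σ * genPerm n c)) + l.length := by
  rw [wordPerm_cons, ← mul_assoc, List.length_cons] at h
  have hle := lengthB_window_mul_wordPerm_le (mul_mem hσ (genPerm_mem_Wb c)) l
  by_cases ha : IsAscent σ c
  · have := lengthB_window_mul_genPerm hσ ha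
    exact ⟨ha, by omega⟩
  · have := lengthB_window_of_not_isAscent hσ ha
    omega

/-- The index of the basis vector `v_{m_1}^{r_{|m_1|}} ⊗ ⋯ ⊗ v_{m_n}^{r_{|m_n|}}`, `m_k = σ(k)`. -/
def tensorIdx (σ : Perm (Fin n × Bool)) (r : Fin n → Fin (n + 1)) : Fin n → VIdx n :=
  fun k => (σ (k, true), r (σ (k, true)).1)

lemma lift_bv (F : (Fin n → VIdx n) → Vten n) (f : Fin n → VIdx n) :
    Finsupp.lift (Vten n) Kfield (Fin n → VIdx n) F (bv f) = F f := by
  rw [bv, Finsupp.lift_apply, Finsupp.sum_single_index (by rw [zero_smul]), one_smul]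

lemma opB_bv (p : Fin n) (f : Fin n → VIdx n) :
    opB n p (bv f) =
      if (f p).2 = 0 ∧ (f p).1.2 = false
        then bv (Function.update f p (negX (f p).1, (f p).2)) + (vK - vK⁻¹) • bv f
        else bv (Function.update f p (negX (f p).1, (f p).2)) :=
  lift_bv _ f

lemma opT_bv (p q : Fin n) (f : Fin n → VIdx n) :
    opT n p q (bv f) =
      (if (f p).2 = (f q).2 then
        if (f p).1 = (f q).1 then uK • bv (Function.update (Function.update f p (f q)) q (f p))
        else if toIntX (f p).1 < toIntX (f q).1 then
          bv (Function.update (Function.update f p (f q)) q (f p))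
        else bv (Function.update (Function.update f p (f q)) q (f p)) + (uK - uK⁻¹) • bv f
      else bv (Function.update (Function.update f p (f q)) q (f p))) :=
  lift_bv _ f

lemma tensorIdx_mul_genPerm_of_eq_zero {σ : Perm (Fin n × Bool)} (hσ : σ ∈ Wb n) {c : Fin n}
    (hc : (c : ℕ) = 0) (r : Fin n → Fin (n + 1)) :
    tensorIdx (σ * genPerm n c) r
      = Function.update (tensorIdx σ r) c (negX (σ (c, true)), r (σ (c, true)).1) := by
  ext k : 1
  rcases eq_or_ne k c with rfl | hk
  · have hflip : ((k, false) : Fin n × Bool) = flipPerm n (k, true) := rfl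
    simp only [tensorIdx, Perm.mul_apply, genPerm_of_eq_zero hc, swap_apply_left,
      Function.update_self, hflip, mem_Wb_iff.mp hσ]
    rfl
  · simp [tensorIdx, genPerm_of_eq_zero hc, swap_apply_of_ne_of_ne, hk]

lemma tensorIdx_mul_genPerm_of_ne_zero (σ : Perm (Fin n × Bool)) {c : Fin n} (hc : (c : ℕ) ≠ 0)
    (r : Fin n → Fin (n + 1)) :
    tensorIdx (σ * genPerm n c) r = tensorIdx σ r ∘ swap (predPos c) c := by
  ext k : 1
  simp [tensorIdx, genPerm_apply_of_ne_zero hc]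

lemma opB_bv_tensorIdx {σ : Perm (Fin n × Bool)} (hσ : σ ∈ Wb n) {c : Fin n} (hc : (c : ℕ) = 0)
    (h : 0 < window σ c) (r : Fin n → Fin (n + 1)) :
    opB n c (bv (tensorIdx σ r)) = bv (tensorIdx (σ * genPerm n c) r) := by
  have hsign : (σ (c, true)).2 = true := (toIntX_pos_iff _).mp h
  rw [opB_bv, if_neg (by simp [tensorIdx, hsign]), tensorIdx_mul_genPerm_of_eq_zero hσ hc]
  rfl

lemma opT_bv_tensorIdx (σ : Perm (Fin n × Bool)) {c : Fin n} (hc : (c : ℕ) ≠ 0)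
    (h : window σ (predPos c) < window σ c) (r : Fin n → Fin (n + 1)) :
    opT n (predPos c) c (bv (tensorIdx σ r)) = bv (tensorIdx (σ * genPerm n c) r) := by
  have hne : (tensorIdx σ r (predPos c)).1 ≠ (tensorIdx σ r c).1 :=
    fun e => h.ne (congrArg toIntX e)
  have hlt : toIntX (tensorIdx σ r (predPos c)).1 < toIntX (tensorIdx σ r c).1 := h
  rw [tensorIdx_mul_genPerm_of_ne_zero σ hc, swap_comm, comp_swap_eq_update, opT_bv,
    if_neg hne, if_pos hlt, ite_self]

lemma wordAlg_cons (c : Fin n) (l : List (Fin n)) :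
    wordAlg Kfield uK vK n (c :: l) =
      (if (c : ℕ) = 0 then bW Kfield uK vK n else tW Kfield uK vK n ((c : ℕ) - 1)) *
        wordAlg Kfield uK vK n l := by
  simp only [wordAlg]
  rfl

lemma unop_Φ_letter_bv_tensorIdx
    (Φ : EB Kfield uK vK n →ₐ[Kfield] (Module.End Kfield (Vten n))ᵐᵒᵖ)
    (hB : ∀ h : 0 < n,
      Φ (gen Kfield uK vK n (.B1 h)) = MulOpposite.op (opB n ⟨0, h⟩))
    (hT : ∀ i : Fin (n - 1),
      Φ (gen Kfield uK vK n (.T i)) =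
        MulOpposite.op
          (opT n ⟨i, Nat.lt_of_lt_of_le i.isLt (Nat.sub_le n 1)⟩
            ⟨i + 1, Nat.lt_sub_iff_add_lt.mp i.isLt⟩))
    (r : Fin n → Fin (n + 1)) {σ : Perm (Fin n × Bool)} (hσ : σ ∈ Wb n) {c : Fin n}
    (ha : IsAscent σ c) :
    (Φ (if (c : ℕ) = 0 then bW Kfield uK vK n else tW Kfield uK vK n ((c : ℕ) - 1))).unop
      (bv (tensorIdx σ r)) = bv (tensorIdx (σ * genPerm n c) r) := by
  unfold IsAscent at ha
  split_ifs at ha ⊢ with hc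
  · have h0 : (⟨0, c.pos⟩ : Fin n) = c := Fin.ext hc.symm
    rw [bW, dif_pos c.pos, hB, MulOpposite.unop_op, h0, opB_bv_tensorIdx hσ hc ha]
  · have hlt : (c : ℕ) - 1 < n - 1 := by omega
    rw [tW, dif_pos hlt, hT, MulOpposite.unop_op]
    convert opT_bv_tensorIdx σ hc ha r using 3
    exacts [rfl, Fin.ext (predPos_add_one hc)]

lemma unop_Φ_wordAlg_bv_tensorIdx
    (Φ : EB Kfield uK vK n →ₐ[Kfield] (Module.End Kfield (Vten n))ᵐᵒᵖ)
    (hB : ∀ h : 0 < n,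
      Φ (gen Kfield uK vK n (.B1 h)) = MulOpposite.op (opB n ⟨0, h⟩))
    (hT : ∀ i : Fin (n - 1),
      Φ (gen Kfield uK vK n (.T i)) =
        MulOpposite.op
          (opT n ⟨i, Nat.lt_of_lt_of_le i.isLt (Nat.sub_le n 1)⟩
            ⟨i + 1, Nat.lt_sub_iff_add_lt.mp i.isLt⟩))
    (r : Fin n → Fin (n + 1)) (l : List (Fin n)) {σ : Perm (Fin n × Bool)} (hσ : σ ∈ Wb n)
    (hl : lengthB (window (σ * wordPerm n l)) = lengthB (window σ) + l.length) :
    (Φ (wordAlg Kfield uK vK n l)).unop (bv (tensorIdx σ r))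
      = bv (tensorIdx (σ * wordPerm n l) r) := by
  induction l generalizing σ with
  | nil => simp [wordAlg, wordPerm]
  | cons c l ih =>
    obtain ⟨ha, hl'⟩ := isAscent_of_lengthB_mul_wordPerm_eq hσ hl
    rw [wordAlg_cons, map_mul, MulOpposite.unop_mul, Module.End.mul_apply,
      unop_Φ_letter_bv_tensorIdx Φ hB hT r hσ ha, ih (mul_mem hσ (genPerm_mem_Wb c)) hl',
      wordPerm_cons, mul_assoc]

end Bt

open Bt in
/-- Let `w ∈ W_n` (realized as a signed permutation of
`X_n = {±1, …, ±n}`, modelled on `Fin n × Bool`), with `m_i = w(i)`.  Then for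
all `r_1, …, r_n ∈ {0, 1, …, n}`:
`(v_1^{r_1} ⊗ ⋯ ⊗ v_n^{r_n}) · Φ(T_w) = v_{m_1}^{r_{|m_1|}} ⊗ ⋯ ⊗ v_{m_n}^{r_{|m_n|}}`,
where `Φ` is the tensorial representation of `E_n^B` on `V^{⊗n}` (acting on the
right, i.e. landing in `End(V^{⊗n})ᵐᵒᵖ`) and `T_w` is the well-defined element
attached to any reduced word for `w`. -/
theorem btB_tensor_rep_Tw (n : ℕ)
    (Φ : EB Kfield uK vK n →ₐ[Kfield] (Module.End Kfield (Vten n))ᵐᵒᵖ)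
    (hB : ∀ h : 0 < n,
      Φ (gen Kfield uK vK n (.B1 h)) = MulOpposite.op (opB n ⟨0, h⟩))
    (hT : ∀ i : Fin (n - 1),
      Φ (gen Kfield uK vK n (.T i)) =
        MulOpposite.op
          (opT n ⟨(i : ℕ), by have := i.isLt; omega⟩
            ⟨(i : ℕ) + 1, by have := i.isLt; omega⟩))
    (Tw : Wb n → EB Kfield uK vK n)
    (hTw : ∀ (w : Wb n) (l : List (Fin n)),
      wordPerm n l = (w : Equiv.Perm (Fin n × Bool)) →
      (∀ l' : List (Fin n),
        wordPerm n l' = (w : Equiv.Perm (Fin n × Bool)) → l.length ≤ l'.length) →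
      Tw w = wordAlg Kfield uK vK n l) :
    ∀ (w : Wb n) (r : Fin n → Fin (n + 1)),
      (MulOpposite.unop (Φ (Tw w))) (bv fun k => ((k, true), r k)) =
        bv fun k =>
          ((w : Equiv.Perm (Fin n × Bool)) (k, true),
            r (((w : Equiv.Perm (Fin n × Bool)) (k, true)).1)) := by
  intro w r
  obtain ⟨l, hl, hlen⟩ := exists_wordPerm_eq w.2
  have hreduced : ∀ l', wordPerm n l' = w → l.length ≤ l'.length := fun l' hl' => by
    have := lengthB_window_mul_wordPerm_le (one_mem (Wb n)) l'
    rwa [one_mul, hl', lengthB_window_one, zero_add, ← hlen] at this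
  rw [hTw w l hl hreduced]
  have := unop_Φ_wordAlg_bv_tensorIdx Φ hB hT r l (one_mem (Wb n))
    (by rw [one_mul, hl, lengthB_window_one, hlen, zero_add])
  rwa [one_mul, hl] at this
end
end

section
/- In E_n^B (n ≥ 2) the following identities hold: (i) T_k B_k B_{k+1} = B_k T_k B_k for all 1 ≤ k ≤ n-1; (ii) 𝕋^-_{k,j} B_k = B_{k-1} 𝕋^-_{k,j} for all 2 ≤ k ≤ n and 1 ≤ j < k. -/
noncomputable section

open scoped Classical

/-!
Both identities rest on one observation: if `a, c` are units with `a c a = c a c`, then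
conjugation by `a c` sends `a` to `c`, and sends any `x` commuting with `c` to `a x a⁻¹`.
Conjugation by `T_k T_{k+1}` thus carries `(T_k, B_k)` to `(T_{k+1}, B_{k+1})`, so the defining
relation `B_1 T_1 B_1 T_1 = T_1 B_1 T_1 B_1` propagates to "`B_k` commutes with `T_k B_k T_k`",
which is (i) once `B_{k+1} = T_k B_k T_k⁻¹` is substituted. For (ii), moving `B_j` to the left
through `T_{k-2} ⋯ T_j` gives `𝕋⁻_{k,j} = T_{k-1} B_{k-1} T_{k-2} ⋯ T_j`; the tail commutes with
`B_k` (conjugation by `T_{i+1} T_i` shows that `T_i` commutes with `B_{i+2}`), and the head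
`T_{k-1} B_{k-1} B_k = B_{k-1} T_{k-1} B_{k-1}` is (i).
-/

section Monoid

variable {M : Type*} [Monoid M]

theorem Commute.of_semiconjBy {g : Mˣ} {x y x' y' : M} (hx : SemiconjBy (g : M) x x')
    (hy : SemiconjBy (g : M) y y') (h : Commute x y) : Commute x' y' :=
  (Units.mul_left_inj g).1 <| by
    rw [← (hx.mul_right hy).eq, h.eq, (hy.mul_right hx).eq]

theorem semiconjBy_mul_of_braid {a c : M} (h : a * c * a = c * a * c) :
    SemiconjBy (a * c) a c := by
  rw [SemiconjBy, h, mul_assoc]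

theorem commute_conj_of_braid {a c : Mˣ} {x : M} (hb : (a * c * a : M) = c * a * c)
    (hcx : Commute (c : M) x) (h : Commute (a * x * a : M) x) :
    Commute (c * (a * x * ↑a⁻¹) * c : M) (a * x * ↑a⁻¹) := by
  have ha : SemiconjBy ((a * c : Mˣ) : M) a c := by
    rw [Units.val_mul]
    exact semiconjBy_mul_of_braid hb
  have hx : SemiconjBy ((a * c : Mˣ) : M) x (a * x * ↑a⁻¹) := by
    rw [Units.val_mul]
    exact (a.mk_semiconjBy x).mul_left hcx
  exact h.of_semiconjBy ((ha.mul_right hx).mul_right ha) hx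

theorem commute_conj_conj_of_braid {a c : Mˣ} {x : M} (hb : (a * c * a : M) = c * a * c)
    (hcx : Commute (c : M) x) : Commute (a : M) (c * (a * x * ↑a⁻¹) * ↑c⁻¹) := by
  have hc : SemiconjBy ((c * a : Mˣ) : M) c a := by
    rw [Units.val_mul]
    exact semiconjBy_mul_of_braid hb.symm
  have hx : SemiconjBy ((c * a : Mˣ) : M) x (c * (a * x * ↑a⁻¹) * ↑c⁻¹) := by
    rw [Units.val_mul]
    exact (c.mk_semiconjBy _).mul_left (a.mk_semiconjBy x)
  exact hcx.of_semiconjBy hc hx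

end Monoid

namespace Bt

variable {R : Type} [Field R] {u v : R} {n : ℕ}

theorem commute_tW_tW {i j : ℕ} (h : i + 1 < j) : Commute (tW R u v n i) (tW R u v n j) := by
  unfold tW
  split_ifs with hi hj
  · simpa only [Commute, SemiconjBy, gen, map_mul]
      using RingQuot.mkAlgHom_rel R (Rel.tt_far ⟨i, hi⟩ ⟨j, hj⟩ h)
  all_goals simp

theorem commute_eW_tW {i j : ℕ} (h : i + 1 < j ∨ j + 1 < i) :
    Commute (eW R u v n i) (tW R u v n j) := by
  unfold tW eW
  split_ifs with hi hj
  · simpa only [Commute, SemiconjBy, gen, map_mul]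
      using RingQuot.mkAlgHom_rel R (Rel.commET_far ⟨i, hi⟩ ⟨j, hj⟩ h)
  all_goals simp

theorem commute_eW_tW_self (i : ℕ) : Commute (eW R u v n i) (tW R u v n i) := by
  unfold tW eW
  split_ifs with hi
  · simpa only [Commute, SemiconjBy, gen, map_mul]
      using RingQuot.mkAlgHom_rel R (Rel.commET (u := u) (v := v) ⟨i, hi⟩)
  · simp

theorem commute_bW_tW {i : ℕ} (h : 0 < i) : Commute (bW R u v n) (tW R u v n i) := by
  unfold tW bW
  split_ifs with hn hi
  · simpa only [Commute, SemiconjBy, gen, map_mul]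
      using RingQuot.mkAlgHom_rel R (Rel.commBT hn ⟨i, hi⟩ h)
  all_goals simp

theorem tW_mul_tW {i : ℕ} (h : i < n - 1) :
    tW R u v n i * tW R u v n i =
      1 + algebraMap R (EB R u v n) (u - u⁻¹) * (eW R u v n i * tW R u v n i) := by
  simpa only [tW, eW, dif_pos h, gen, map_mul, map_add, map_one, AlgHom.commutes]
    using RingQuot.mkAlgHom_rel R (Rel.quadT (v := v) ⟨i, h⟩)

theorem tW_braid {i : ℕ} (h : i + 1 < n - 1) :
    tW R u v n i * tW R u v n (i + 1) * tW R u v n i =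
      tW R u v n (i + 1) * tW R u v n i * tW R u v n (i + 1) := by
  simpa only [tW, dif_pos h, dif_pos (show i < n - 1 by omega), gen, map_mul]
    using RingQuot.mkAlgHom_rel R (Rel.braid (u := u) (v := v) ⟨i, by omega⟩ ⟨i + 1, h⟩ rfl)

theorem bW_tW_bW_tW (h : 1 < n) :
    bW R u v n * tW R u v n 0 * bW R u v n * tW R u v n 0 =
      tW R u v n 0 * bW R u v n * tW R u v n 0 * bW R u v n := by
  simpa only [tW, bW, dif_pos (show 0 < n - 1 by omega), dif_pos (show 0 < n by omega), gen,
    map_mul]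
    using RingQuot.mkAlgHom_rel R (Rel.bquad (u := u) (v := v) (by omega) ⟨0, by omega⟩ rfl)

theorem tInv_mul_tW {i : ℕ} (h : i < n - 1) : tInv R u v n i * tW R u v n i = 1 := by
  rw [tInv, sub_mul, tW_mul_tW h, mul_assoc, add_sub_cancel_right]

theorem tW_mul_tInv {i : ℕ} (h : i < n - 1) : tW R u v n i * tInv R u v n i = 1 := by
  rw [tInv, mul_sub, Algebra.left_comm, ← (commute_eW_tW_self i).eq, tW_mul_tW h,
    add_sub_cancel_right]

theorem commute_tW_tInv {i j : ℕ} (h : i + 1 < j ∨ j + 1 < i) :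
    Commute (tW R u v n i) (tInv R u v n j) := by
  refine Commute.sub_right ?_
    ((Algebra.commute_algebraMap_right _ _).mul_right (commute_eW_tW h.symm).symm)
  rcases h with h | h
  · exact commute_tW_tW h
  · exact (commute_tW_tW h).symm

variable (R u v n) in
def tUnit {i : ℕ} (h : i < n - 1) : (EB R u v n)ˣ :=
  ⟨tW R u v n i, tInv R u v n i, tW_mul_tInv h, tInv_mul_tW h⟩

theorem bK_of_le_one {k : ℕ} (hk : k ≤ 1) : bK R u v n k = bW R u v n := by
  simp [bK, Nat.sub_eq_zero_of_le hk]

theorem bK_add_two (k : ℕ) :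
    bK R u v n (k + 2) = tW R u v n k * bK R u v n (k + 1) * tInv R u v n k := by
  simp [bK, List.range_succ, mul_assoc]

theorem commute_tW_bK {i : ℕ} (hi : 0 < i) :
    ∀ {k : ℕ}, k ≤ i → Commute (tW R u v n i) (bK R u v n k)
  | 0, _ | 1, _ => by
    rw [bK_of_le_one (by omega)]
    exact (commute_bW_tW hi).symm
  | k + 2, hk => by
    rw [bK_add_two]
    exact ((commute_tW_tW (by omega)).symm.mul_right (commute_tW_bK hi (by omega))).mul_right
      (commute_tW_tInv (Or.inr (by omega)))

theorem commute_tW_bK_mul_tW_bK {k : ℕ} (hk : k < n - 1) :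
    Commute (tW R u v n k * bK R u v n (k + 1) * tW R u v n k) (bK R u v n (k + 1)) := by
  induction k with
  | zero =>
    rw [bK_of_le_one le_rfl]
    simpa only [Commute, SemiconjBy, mul_assoc] using (bW_tW_bW_tW (by omega)).symm
  | succ k ih =>
    rw [bK_add_two]
    exact commute_conj_of_braid (a := tUnit R u v n (i := k) (by omega)) (c := tUnit R u v n hk)
      (tW_braid hk) (commute_tW_bK (by omega) le_rfl) (ih (by omega))

theorem tW_mul_bK {k : ℕ} (hk : k < n - 1) :
    tW R u v n k * bK R u v n (k + 1) = bK R u v n (k + 2) * tW R u v n k := by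
  rw [bK_add_two, mul_assoc _ (tInv R u v n k), tInv_mul_tW hk, mul_one]

theorem tW_mul_bK_mul_bK {k : ℕ} (hk : k < n - 1) :
    tW R u v n k * bK R u v n (k + 1) * bK R u v n (k + 2) =
      bK R u v n (k + 1) * tW R u v n k * bK R u v n (k + 1) :=
  calc tW R u v n k * bK R u v n (k + 1) * bK R u v n (k + 2)
      = tW R u v n k * bK R u v n (k + 1) * tW R u v n k * bK R u v n (k + 1) *
          tInv R u v n k := by
        rw [bK_add_two]
        simp only [mul_assoc]
    _ = bK R u v n (k + 1) * tW R u v n k * bK R u v n (k + 1) *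
          (tW R u v n k * tInv R u v n k) := by
        rw [(commute_tW_bK_mul_tW_bK hk).eq]
        simp only [mul_assoc]
    _ = bK R u v n (k + 1) * tW R u v n k * bK R u v n (k + 1) := by
        rw [tW_mul_tInv hk, mul_one]

theorem commute_tW_bK_of_add_three_le {i k : ℕ} (hik : i + 3 ≤ k) (hk : k ≤ n) :
    Commute (tW R u v n i) (bK R u v n k) := by
  obtain ⟨k, rfl⟩ : ∃ m, k = m + 2 := ⟨k - 2, by omega⟩
  induction k, (show i + 1 ≤ k by omega) using Nat.le_induction with
  | base =>
    rw [bK_add_two, bK_add_two]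
    exact commute_conj_conj_of_braid (a := tUnit R u v n (i := i) (by omega))
      (c := tUnit R u v n (i := i + 1) (by omega)) (tW_braid (by omega))
      (commute_tW_bK (by omega) le_rfl)
  | succ k hik' ih =>
    rw [bK_add_two]
    exact ((commute_tW_tW (by omega)).mul_right (ih (by omega) (by omega))).mul_right
      (commute_tW_tInv (Or.inl (by omega)))

theorem Tp_self (k : ℕ) : Tp R u v n k k = 1 := by
  simp [Tp]

theorem Tp_add_two {j k : ℕ} (hj : 0 < j) (hjk : j ≤ k + 1) :
    Tp R u v n (k + 2) j = tW R u v n k * Tp R u v n (k + 1) j := by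
  rw [Tp, Tp, show k + 2 - j = k + 1 - j + 1 by omega, List.range_succ, List.reverse_append,
    List.map_append, List.prod_append]
  simp [show j - 1 + (k + 1 - j) = k by omega]

theorem Tp_mul_bK {j k : ℕ} (hj : 0 < j) (hjk : j ≤ k) (hk : k ≤ n) :
    Tp R u v n k j * bK R u v n j = bK R u v n k * Tp R u v n k j := by
  induction k, hjk using Nat.le_induction with
  | base => rw [Tp_self, one_mul, mul_one]
  | succ k hjk ih =>
    obtain ⟨k, rfl⟩ : ∃ m, k = m + 1 := ⟨k - 1, by omega⟩
    rw [Tp_add_two hj hjk, mul_assoc, ih (by omega), ← mul_assoc, tW_mul_bK (by omega),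
      mul_assoc]

theorem commute_Tp_bK {j k : ℕ} (hj : 0 < j) (hk : k + 1 ≤ n) :
    Commute (Tp R u v n k j) (bK R u v n (k + 1)) := by
  refine Commute.list_prod_left _ _ fun x hx => ?_
  obtain ⟨a, ha, rfl⟩ := List.mem_map.1 hx
  have : a < k - j := by simpa using ha
  exact commute_tW_bK_of_add_three_le (by omega) hk

theorem Tm_add_two {j k : ℕ} (hj : 0 < j) (hjk : j ≤ k + 1) (hk : k + 2 ≤ n) :
    Tm R u v n (k + 2) j = tW R u v n k * bK R u v n (k + 1) * Tp R u v n (k + 1) j := by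
  rw [Tm, Tp_add_two hj hjk, mul_assoc, Tp_mul_bK hj hjk (by omega), mul_assoc]

theorem Tm_mul_bK {j k : ℕ} (hj : 0 < j) (hjk : j ≤ k + 1) (hk : k + 2 ≤ n) :
    Tm R u v n (k + 2) j * bK R u v n (k + 2) = bK R u v n (k + 1) * Tm R u v n (k + 2) j :=
  calc Tm R u v n (k + 2) j * bK R u v n (k + 2)
      = tW R u v n k * bK R u v n (k + 1) * bK R u v n (k + 2) * Tp R u v n (k + 1) j := by
        rw [Tm_add_two hj hjk hk, mul_assoc _ (Tp R u v n _ j), (commute_Tp_bK hj hk).eq,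
          ← mul_assoc]
    _ = bK R u v n (k + 1) * Tm R u v n (k + 2) j := by
        rw [tW_mul_bK_mul_bK (by omega), Tm_add_two hj hjk hk]
        simp only [mul_assoc]

end Bt

open Bt in
theorem btB_restantes_general (n : ℕ) :
    (∀ k : ℕ, 1 ≤ k → k ≤ n - 1 →
      tW Kfield uK vK n (k - 1) * bK Kfield uK vK n k * bK Kfield uK vK n (k + 1) =
        bK Kfield uK vK n k * tW Kfield uK vK n (k - 1) * bK Kfield uK vK n k) ∧
    (∀ k j : ℕ, 2 ≤ k → k ≤ n → 1 ≤ j → j < k →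
      Tm Kfield uK vK n k j * bK Kfield uK vK n k =
        bK Kfield uK vK n (k - 1) * Tm Kfield uK vK n k j) := by
  refine ⟨fun k hk hkn => ?_, fun k j hk hkn hj hjk => ?_⟩
  · obtain ⟨k, rfl⟩ : ∃ m, k = m + 1 := ⟨k - 1, by omega⟩
    exact tW_mul_bK_mul_bK (by omega)
  · obtain ⟨k, rfl⟩ : ∃ m, k = m + 2 := ⟨k - 2, by omega⟩
    exact Tm_mul_bK hj (by omega) hkn

open Bt in
/-- In `E_n^B` (`n ≥ 2`):
(i) `T_k B_k B_{k+1} = B_k T_k B_k` for all `1 ≤ k ≤ n-1`;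
(ii) `𝕋⁻_{k,j} B_k = B_{k-1} 𝕋⁻_{k,j}` for all `2 ≤ k ≤ n` and `1 ≤ j < k`.
(Indices are the paper's 1-indexed ones; `T_k` is `tW (k-1)`.) -/
theorem btB_restantes (n : ℕ) (hn : 2 ≤ n) :
    (∀ k : ℕ, 1 ≤ k → k ≤ n - 1 →
      tW Kfield uK vK n (k - 1) * bK Kfield uK vK n k * bK Kfield uK vK n (k + 1) =
        bK Kfield uK vK n k * tW Kfield uK vK n (k - 1) * bK Kfield uK vK n k) ∧
    (∀ k j : ℕ, 2 ≤ k → k ≤ n → 1 ≤ j → j < k →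
      Tm Kfield uK vK n k j * bK Kfield uK vK n k =
        bK Kfield uK vK n (k - 1) * Tm Kfield uK vK n k j) :=
  btB_restantes_general n
end
end

section
/- Let 1 ≤ k < n, let J be a set partition of {0, 1, ..., n-1} and let I be a set partition of {0, 1, ..., n}. Let σ_{j,k} := s_{j-1} ⋯ s_k ∈ S_n (where s_i is the transposition (i, i+1)), and let S_n act on set partitions of {0, 1, ..., n} by permuting {1, ..., n} elementwise and fixing 0 (partitions of {0, ..., n-1} are regarded as partitions of {0, ..., n} by adding n as a singleton block, and conversely). Then: ((σ_{n,k}^{-1}(J) * I) * {n, k}) ∖ {n} = σ_{n-1,k}^{-1}(J) * ((I * {n, k}) ∖ {n}), as set partitions of {0, 1, ..., n-1}. -/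
/-! Since `σ_{n,k} = σ_{n-1,k} ∘ (n k)` and the transposition `(n k)` moves every point
within a block of `{n, k}`, joining with `{n, k}` absorbs it:
`σ_{n,k}⁻¹(J) * {n, k} = σ_{n-1,k}⁻¹(J) * {n, k}`. As `σ_{n-1,k}` fixes `n`, the point `n`
is a singleton block of `σ_{n-1,k}⁻¹(J)`, and deleting a point commutes with joining a
partition in which it is a singleton. -/

set_option synthInstance.maxHeartbeats 1000000
set_option maxHeartbeats 2000000
noncomputable section

namespace Bt

/-- Deleting an element from a set partition: `delS I k` is the partition in
which `k` has been removed from its block (and made into a singleton). -/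
def delS {X : Type} (I : Setoid X) (k : X) : Setoid X :=
  ⟨fun a b => a = b ∨ (a ≠ k ∧ b ≠ k ∧ I a b), by
    constructor
    · exact fun a => Or.inl rfl
    · rintro a b (rfl | ⟨ha, hb, h⟩)
      · exact Or.inl rfl
      · exact Or.inr ⟨hb, ha, I.iseqv.symm h⟩
    · rintro a b c (rfl | ⟨ha, hb, h⟩) h2
      · exact h2
      · rcases h2 with rfl | ⟨hb', hc, h'⟩
        · exact Or.inr ⟨ha, hb, h⟩
        · exact Or.inr ⟨ha, hc, I.iseqv.trans h h'⟩⟩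

/-- The set partition generated by merging the (blocks of) `a` and `b`. -/
def pairS {X : Type} (a b : X) : Setoid X := Relation.EqvGen.setoid fun x y => x = a ∧ y = b

/-- `τ_{a,b}(I) = (I * {a, b}) ∖ {a}` (with the deleted element kept as a
singleton block). -/
def tauS {X : Type} (I : Setoid X) (a b : X) : Setoid X := delS (I ⊔ pairS a b) a

/-- A permutation `σ ∈ S_n` of `{1, …, n}` extended to `{0, 1, …, n}` fixing
`0`; element `i + 1` of `Fin (n+1)` corresponds to `i ∈ {1, …, n}`. -/
def liftPerm {n : ℕ} (σ : Equiv.Perm (Fin n)) : Equiv.Perm (Fin (n + 1)) :=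
  (finSuccEquiv n).trans ((Equiv.optionCongr σ).trans (finSuccEquiv n).symm)

/-- The action of `σ ∈ S_n` on set partitions of `{0, 1, …, n}` (pushforward of
blocks; `0` is fixed). -/
def actS {n : ℕ} (σ : Equiv.Perm (Fin n)) (I : Setoid (Fin (n + 1))) :
    Setoid (Fin (n + 1)) :=
  Setoid.comap (liftPerm σ).symm I

end Bt
namespace Bt

/-- The transposition `s_i = (i, i+1)` of `{1, …, n}`, as a permutation of
`{0, 1, …, n}` fixing `0` (and the identity if out of range). -/
def sPerm (n i : ℕ) : Equiv.Perm (Fin (n + 1)) :=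
  if h : 1 ≤ i ∧ i + 1 ≤ n then
    Equiv.swap (⟨i, by omega⟩ : Fin (n + 1)) (⟨i + 1, by omega⟩ : Fin (n + 1))
  else 1

/-- `σ_{j,k} = s_{j-1} ⋯ s_k` (for `k < j`), as a permutation of `{0, 1, …, n}`. -/
def sigmaJK (n j k : ℕ) : Equiv.Perm (Fin (n + 1)) :=
  ((List.range (j - k)).map fun a => sPerm n (j - 1 - a)).prod

/-- The action of `σ⁻¹` on set partitions of `{0, 1, …, n}`:
`x ∼ y` in `σ⁻¹(I)` iff `σ(x) ∼ σ(y)` in `I`. -/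
def actInv {n : ℕ} (σ : Equiv.Perm (Fin (n + 1))) (I : Setoid (Fin (n + 1))) :
    Setoid (Fin (n + 1)) :=
  Setoid.comap σ I

end Bt

namespace Bt

section Partitions

variable {X : Type}

theorem comap_le_sup_of_rel_apply {A P : Setoid X} {f : X → X} (hf : ∀ x, P x (f x)) :
    Setoid.comap f A ≤ A ⊔ P := by
  intro x y hxy
  have hP : ∀ x, (A ⊔ P) x (f x) := fun x => (le_sup_right : P ≤ A ⊔ P) (hf x)
  exact (A ⊔ P).trans (hP x)
    ((A ⊔ P).trans ((le_sup_left : A ≤ A ⊔ P) hxy) ((A ⊔ P).symm (hP y)))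

theorem comap_perm_sup_eq {A P : Setoid X} (e : Equiv.Perm X) (he : ∀ x, P x (e x)) :
    Setoid.comap e A ⊔ P = A ⊔ P := by
  refine le_antisymm (sup_le (comap_le_sup_of_rel_apply he) le_sup_right)
    (sup_le ?_ le_sup_right)
  have he' : ∀ x, P x (e.symm x) := fun x => by simpa using P.symm (he (e.symm x))
  calc A = Setoid.comap e.symm (Setoid.comap e A) := by ext; simp [Setoid.comap_rel]
    _ ≤ Setoid.comap e A ⊔ P := comap_le_sup_of_rel_apply he'

theorem pairS_apply_swap [DecidableEq X] (a b x : X) : pairS a b x (Equiv.swap a b x) := by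
  have hab : pairS a b a b := Relation.EqvGen.rel _ _ ⟨rfl, rfl⟩
  rcases eq_or_ne x a with rfl | hxa
  · simpa using hab
  rcases eq_or_ne x b with rfl | hxb
  · simpa using (pairS a x).symm hab
  · simp [Equiv.swap_apply_of_ne_of_ne hxa hxb]

theorem delS_mono {B C : Setoid X} (h : B ≤ C) (n : X) : delS B n ≤ delS C n := by
  rintro a b (rfl | ⟨ha, hb, hab⟩)
  exacts [Or.inl rfl, Or.inr ⟨ha, hb, h hab⟩]

theorem delS_eq_self {B : Setoid X} {n : X} (hn : ∀ y, B n y → y = n) : delS B n = B := by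
  refine le_antisymm (fun a b => ?_) (fun a b hab => ?_)
  · rintro (rfl | ⟨-, -, hab⟩)
    exacts [B.refl' a, hab]
  · by_cases ha : a = n
    · subst ha; exact Or.inl (hn b hab).symm
    by_cases hb : b = n
    · subst hb; exact Or.inl (hn a (B.symm hab))
    exact Or.inr ⟨ha, hb, hab⟩

/-- Sending `n` to a `B`-neighbour `w ≠ n` turns `A ⊔ B` into a relation among the
points other than `n`. -/
theorem sup_le_comap_update_sup_delS [DecidableEq X] {A B : Setoid X} {n w : X}
    (hA : ∀ y, A n y → y = n) (hnw : B n w) (hwn : w ≠ n) :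
    A ⊔ B ≤ Setoid.comap (Function.update id n w) (A ⊔ delS B n) := by
  set C := A ⊔ delS B n
  set f := Function.update id n w
  have hfn : ∀ x, x ≠ n → f x = x := fun x hx => by simp [f, hx]
  refine sup_le (fun x y hxy => ?_) (fun x y hxy => ?_)
  · by_cases hx : x = n
    · subst hx; obtain rfl := hA y hxy; exact C.refl' _
    have hy : y ≠ n := fun hy => hx (hA x (A.symm (hy ▸ hxy)))
    rw [Setoid.comap_rel, hfn x hx, hfn y hy]
    exact (le_sup_left : A ≤ C) hxy
  · have hBC : ∀ u v, u ≠ n → B u v → C (f u) (f v) := fun u v hu huv => by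
      rw [hfn u hu]
      by_cases hv : v = n
      · subst hv
        simpa [f] using (le_sup_right : delS B v ≤ C) (Or.inr ⟨hu, hwn, B.trans huv hnw⟩)
      · rw [hfn v hv]; exact (le_sup_right : delS B n ≤ C) (Or.inr ⟨hu, hv, huv⟩)
    by_cases hx : x = n
    · by_cases hy : y = n
      · subst hx hy; exact C.refl' _
      · exact C.symm (hBC y x hy (B.symm hxy))
    · exact hBC x y hx hxy

theorem delS_sup_of_singleton {A B : Setoid X} {n : X} (hA : ∀ y, A n y → y = n) :
    delS (A ⊔ B) n = A ⊔ delS B n := by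
  classical
  refine le_antisymm ?_ ?_
  · rintro a b (rfl | ⟨ha, hb, hab⟩)
    · exact (A ⊔ delS B n).refl' a
    by_cases hB : ∀ y, B n y → y = n
    · rwa [delS_eq_self hB]
    obtain ⟨w, hnw, hwn⟩ : ∃ w, B n w ∧ w ≠ n := by
      simpa only [not_forall, exists_prop] using hB
    simpa [Setoid.comap_rel, ha, hb] using sup_le_comap_update_sup_delS hA hnw hwn hab
  · calc A ⊔ delS B n ≤ delS A n ⊔ delS B n := by rw [delS_eq_self hA]
      _ ≤ delS (A ⊔ B) n := sup_le (delS_mono le_sup_left n) (delS_mono le_sup_right n)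

end Partitions

theorem actInv_mul {n : ℕ} (σ τ : Equiv.Perm (Fin (n + 1))) (J : Setoid (Fin (n + 1))) :
    actInv (σ * τ) J = Setoid.comap τ (actInv σ J) := rfl

theorem sigmaJK_self (n k : ℕ) : sigmaJK n k k = 1 := by
  simp [sigmaJK]

theorem sigmaJK_succ (n j k : ℕ) (h : k ≤ j) :
    sigmaJK n (j + 1) k = sPerm n j * sigmaJK n j k := by
  unfold sigmaJK
  rw [show j + 1 - k = (j - k) + 1 by omega, List.range_succ_eq_map, List.map_cons,
    List.prod_cons, List.map_map]
  congr 2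
  refine List.map_congr_left fun a _ => ?_
  simp only [Function.comp_apply]
  congr 1
  omega

theorem sigmaJK_apply (n j k : ℕ) (hk : 1 ≤ k) (hkj : k ≤ j) (hjn : j ≤ n)
    (x : Fin (n + 1)) :
    (sigmaJK n j k x : ℕ) =
      if (x : ℕ) = k then j
      else if k < (x : ℕ) ∧ (x : ℕ) ≤ j then (x : ℕ) - 1 else (x : ℕ) := by
  induction j, hkj using Nat.le_induction with
  | base =>
    rw [sigmaJK_self]
    split_ifs <;> simp <;> omega
  | succ j hkj ih =>
    have hs : sPerm n j = Equiv.swap (⟨j, by omega⟩ : Fin (n + 1)) ⟨j + 1, by omega⟩ :=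
      dif_pos ⟨by omega, by omega⟩
    have hy := ih (by omega)
    rw [sigmaJK_succ n j k hkj, Equiv.Perm.mul_apply, hs, Equiv.swap_apply_def]
    simp only [Fin.ext_iff, apply_ite Fin.val]
    split_ifs at hy ⊢ <;> omega

theorem sigmaJK_pred_apply_last (n k : ℕ) (hk1 : 1 ≤ k) (hk2 : k < n) :
    sigmaJK n (n - 1) k (Fin.last n) = Fin.last n := by
  ext
  rw [sigmaJK_apply n (n - 1) k hk1 (by omega) (by omega)]
  simp only [Fin.val_last]
  split_ifs <;> omega

theorem sigmaJK_eq_mul_swap (n k : ℕ) (hk1 : 1 ≤ k) (hk2 : k < n) :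
    sigmaJK n n k =
      sigmaJK n (n - 1) k * Equiv.swap (Fin.last n) ⟨k, hk2.trans n.lt_succ_self⟩ := by
  ext x
  rw [Equiv.Perm.mul_apply, sigmaJK_apply n n k hk1 hk2.le le_rfl,
    sigmaJK_apply n (n - 1) k hk1 (by omega) (by omega), Equiv.swap_apply_def]
  have := x.isLt
  simp only [Fin.ext_iff, Fin.val_last, apply_ite Fin.val]
  split_ifs <;> omega

end Bt

open Bt in
/-- Let `1 ≤ k < n`, let `J` be a set partition of
`{0, 1, …, n-1}` (regarded as a partition of `{0, …, n}` with `n` a singleton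
block) and let `I` be a set partition of `{0, 1, …, n}`.  With
`σ_{j,k} = s_{j-1} ⋯ s_k ∈ S_n` acting on partitions fixing `0`, one has
`((σ_{n,k}⁻¹(J) * I) * {n, k}) ∖ {n} = σ_{n-1,k}⁻¹(J) * ((I * {n, k}) ∖ {n})`
(deleted elements being kept as singleton blocks, and `I * J` denoting the join
of partitions). -/
theorem partition_sigma_identity (n : ℕ) (k : ℕ) (hk1 : 1 ≤ k) (hk2 : k < n)
    (J I : Setoid (Fin (n + 1)))
    (hJ : ∀ y, J (Fin.last n) y → y = Fin.last n) :
    delS ((actInv (sigmaJK n n k) J ⊔ I) ⊔ pairS (Fin.last n) ⟨k, by omega⟩)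
        (Fin.last n) =
      actInv (sigmaJK n (n - 1) k) J ⊔
        delS (I ⊔ pairS (Fin.last n) ⟨k, by omega⟩) (Fin.last n) := by
  have hlast : ∀ y, actInv (sigmaJK n (n - 1) k) J (Fin.last n) y → y = Fin.last n := by
    intro y hy
    rw [actInv, Setoid.comap_rel, sigmaJK_pred_apply_last n k hk1 hk2] at hy
    rw [← (sigmaJK n (n - 1) k).apply_eq_iff_eq, hJ _ hy, sigmaJK_pred_apply_last n k hk1 hk2]
  rw [sup_right_comm, sigmaJK_eq_mul_swap n k hk1 hk2, actInv_mul,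
    comap_perm_sup_eq _ (pairS_apply_swap _ _), sup_assoc, sup_comm (pairS _ _) I,
    delS_sup_of_singleton hlast]
end
end
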